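/- Let H be a real Hilbert space and let S and A be bounded linear operators on H such that S is self-adjoint and ⟨x, A x⟩ = 0 for every x ∈ H. Let λ > 0 and let f, f_s, f_rev ∈ H satisfy f + f_rev = 2·f_s. If u, v ∈ H satisfy λ·u − S u − A u = f and λ·v − S v = f_s, then ⟨f_s, v⟩ − ⟨f_rev, u⟩ = λ·‖u − v‖² + ⟨u − v, −S(u − v)⟩. -/

import Mathlib

/-!
Put `T := λ - S`, a symmetric operator, so that `fs = T v`. Since `⟪u, A u⟫ = 0`, the equation for `u`
gives `⟪f, u⟫ = ⟪T u, u⟫`. Eliminating `frev = 2 fs - f`, the left-hand side becomes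
`⟪T u, u⟫ - 2 ⟪T v, u⟫ + ⟪T v, v⟫`, which by symmetry of `T` is the quadratic form `⟪T (u - v), u - v⟫`,
i.e. the right-hand side.
-/

open RealInnerProductSpace

theorem LinearMap.IsSymmetric.inner_map_sub_sub {E : Type*} [NormedAddCommGroup E]
    [InnerProductSpace ℝ E] {T : E →ₗ[ℝ] E} (hT : T.IsSymmetric) (x y : E) :
    ⟪T (x - y), x - y⟫ = ⟪T x, x⟫ - 2 * ⟪T y, x⟫ + ⟪T y, y⟫ := by
  rw [map_sub, inner_sub_left, inner_sub_right, inner_sub_right, hT x y, real_inner_comm x (T y)]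
  ring

theorem stmt_0 {H : Type*} [NormedAddCommGroup H] [InnerProductSpace ℝ H]
    (S A : H →L[ℝ] H)
    (hS : ∀ x y : H, ⟪S x, y⟫ = ⟪x, S y⟫)
    (hA : ∀ x : H, ⟪x, A x⟫ = 0)
    (lam : ℝ)
    (f fs frev u v : H)
    (hf : f + frev = (2 : ℝ) • fs)
    (hu : lam • u - S u - A u = f)
    (hv : lam • v - S v = fs) :
    ⟪fs, v⟫ - ⟪frev, u⟫ = lam * ‖u - v‖ ^ 2 + ⟪u - v, -(S (u - v))⟫ := by
  set T : H →ₗ[ℝ] H := lam • LinearMap.id - (S : H →ₗ[ℝ] H)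
  have hT : T.IsSymmetric := (LinearMap.IsSymmetric.id.smul (conj_trivial lam)).sub hS
  have hfs : fs = T v := hv.symm
  have hfu : ⟪f, u⟫ = ⟪T u, u⟫ := by
    rw [← hu, inner_sub_left, real_inner_comm u (A u), hA, sub_zero]
    rfl
  have hfrev : frev = (2 : ℝ) • fs - f := by rw [← hf, add_sub_cancel_left]
  calc ⟪fs, v⟫ - ⟪frev, u⟫ = ⟪T u, u⟫ - 2 * ⟪T v, u⟫ + ⟪T v, v⟫ := by
        rw [hfrev, inner_sub_left, inner_smul_left, hfu, hfs, conj_trivial]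
        ring
    _ = ⟪T (u - v), u - v⟫ := (hT.inner_map_sub_sub u v).symm
    _ = lam * ‖u - v‖ ^ 2 + ⟪u - v, -(S (u - v))⟫ := by
        generalize u - v = w
        simp only [T, LinearMap.sub_apply, LinearMap.smul_apply, LinearMap.id_apply,
          ContinuousLinearMap.coe_coe, inner_sub_left, inner_smul_left, conj_trivial,
          real_inner_self_eq_norm_sq, inner_neg_right, real_inner_comm w (S w)]
        ring
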